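/- Let c ∈ ℝ, let f : ℝ → ℝ be six times continuously differentiable, and fix x ∈ ℝ. Then the two BFD stencils are third-order accurate approximations of f''(x): as h → 0⁺, (S⁻ₕf(x) − f''(x))/h³ → −c f⁽⁵⁾(x)/96 and (S⁺ₕf(x) − f''(x))/h³ → c f⁽⁵⁾(x)/96. -/

import Mathlib

/-!
Taylor's theorem with Peano remainder gives, for any stencil, `∑ wᵢ f(x + aᵢh) =
∑_{k ≤ 5} Mₖ hᵏ f⁽ᵏ⁾(x) / k! + o(h⁵)` with moments `Mₖ = ∑ wᵢ aᵢᵏ`. Writing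
`S⁻ₕ f(x) = h⁻² ∑ wᵢ f(x + aᵢh)`, the weights have `M₀ = M₁ = M₃ = M₄ = 0`, `M₂ = 2` (so the
`h²` term is exactly `f''(x)`) and `M₅ = -5c/4`, which produces the error `-c f⁽⁵⁾(x) h³ / 96`.
The stencil `S⁺ₕ` is the mirror image `S⁻₋ₕ`, and the odd power `h³` flips the sign of its error.
-/

open Filter Topology

/-- The BFD stencil `S⁻ₕ` (node `x_{j-1/4}`) applied to `f : ℝ → ℝ`. -/
noncomputable def SminusR (c h : ℝ) (f : ℝ → ℝ) (x : ℝ) : ℝ :=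
  (1/(3*h^2)) *
    ((-f (x-h) + 16*f (x-h/2) - 30*f x + 16*f (x+h/2) - f (x+h)) +
      c * (f (x-h) - 5*f (x-h/2) + 10*f x - 10*f (x+h/2) + 5*f (x+h)
        - f (x+3*h/2)))

/-- The BFD stencil `S⁺ₕ` (node `x_{j+1/4}`) applied to `f : ℝ → ℝ`. -/
noncomputable def SplusR (c h : ℝ) (f : ℝ → ℝ) (x : ℝ) : ℝ :=
  (1/(3*h^2)) *
    ((-f (x-h) + 16*f (x-h/2) - 30*f x + 16*f (x+h/2) - f (x+h)) +
      c * (-f (x-3*h/2) + 5*f (x-h) - 10*f (x-h/2) + 10*f x - 5*f (x+h/2)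
        + f (x+h)))

open Asymptotics Finset
open scoped Nat

variable {E : Type*} [NormedAddCommGroup E] [NormedSpace ℝ E]

theorem taylor_isLittleO_iteratedDeriv {f : ℝ → E} {n : ℕ} (hf : ContDiff ℝ n f) (x : ℝ) :
    (fun t : ℝ => f (x + t) - ∑ k ∈ range (n + 1), (t ^ k / k !) • iteratedDeriv k f x)
      =o[𝓝 0] (· ^ n) := by
  have hx : Tendsto (x + ·) (𝓝 0) (𝓝 x) := by
    simpa using (continuous_const_add x).tendsto 0
  simpa [taylor_within_apply, iteratedDerivWithin_univ, div_eq_inv_mul, Function.comp_def] using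
    (taylor_isLittleO_univ hf).comp_tendsto hx

theorem isLittleO_stencil_sub_taylor {ι : Type*} (s : Finset ι) (w a : ι → ℝ) {f : ℝ → E}
    {n : ℕ} (hf : ContDiff ℝ n f) (x : ℝ) :
    (fun h : ℝ => ∑ i ∈ s, w i • f (x + a i * h) -
        ∑ k ∈ range (n + 1), ((∑ i ∈ s, w i * a i ^ k) * h ^ k / k !) • iteratedDeriv k f x)
      =o[𝓝 0] (· ^ n) := by
  set R := fun t : ℝ => f (x + t) - ∑ k ∈ range (n + 1), (t ^ k / k !) • iteratedDeriv k f x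
  have hR : ∀ i, (fun h : ℝ => R (a i * h)) =o[𝓝 0] (· ^ n) := fun i => by
    have hlin : Tendsto (a i * ·) (𝓝 0) (𝓝 0) := by
      simpa using (continuous_const_mul (a i)).tendsto 0
    refine ((taylor_isLittleO_iteratedDeriv hf x).comp_tendsto hlin).trans_isBigO ?_
    simpa [Function.comp_def, mul_pow] using (isBigO_refl (· ^ n) (𝓝 (0:ℝ))).const_mul_left (a i ^ n)
  refine (IsLittleO.fun_sum (s := s) fun i _ => (hR i).const_smul_left (w i)).congr_left fun h => ?_
  simp only [R, Pi.smul_apply, smul_sub, smul_sum, sum_sub_distrib, smul_smul]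
  rw [sum_comm]
  congr 1
  refine sum_congr rfl fun k _ => ?_
  rw [← sum_smul, sum_mul, sum_div]
  congr 1
  refine sum_congr rfl fun i _ => ?_
  ring

theorem tendsto_stencil_sub_iteratedDeriv_two {ι : Type*} (s : Finset ι) (w a : ι → ℝ)
    {f : ℝ → E} (hf : ContDiff ℝ 5 f) (x : ℝ) {m : ℝ} (h0 : ∑ i ∈ s, w i = 0)
    (h1 : ∑ i ∈ s, w i * a i = 0) (h2 : ∑ i ∈ s, w i * a i ^ 2 = 2)
    (h3 : ∑ i ∈ s, w i * a i ^ 3 = 0) (h4 : ∑ i ∈ s, w i * a i ^ 4 = 0)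
    (h5 : ∑ i ∈ s, w i * a i ^ 5 = m) :
    Tendsto (fun h : ℝ => (h ^ 3)⁻¹ • ((h ^ 2)⁻¹ • ∑ i ∈ s, w i • f (x + a i * h) -
        iteratedDeriv 2 f x)) (𝓝[≠] 0) (𝓝 ((m / 120) • iteratedDeriv 5 f x)) := by
  have hrem := (isLittleO_stencil_sub_taylor s w a hf x).tendsto_inv_smul_nhds_zero
  simp only [sum_range_succ, sum_range_zero, pow_zero, mul_one, pow_one, h0, h1, h2, h3, h4, h5,
    zero_mul, zero_div, zero_smul, zero_add] at hrem
  have hlim := (tendsto_nhdsWithin_of_tendsto_nhds (s := {0}ᶜ) hrem).add_const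
    ((m / 120) • iteratedDeriv 5 f x)
  rw [zero_add] at hlim
  refine hlim.congr' ?_
  filter_upwards [self_mem_nhdsWithin] with h (hh : h ≠ 0)
  simp only [smul_sub, smul_add, smul_smul]
  match_scalars <;> field_simp <;> norm_num [Nat.factorial]

noncomputable def bfdNodes : Fin 6 → ℝ := ![-1, -1/2, 0, 1/2, 1, 3/2]

noncomputable def bfdWeights (c : ℝ) : Fin 6 → ℝ :=
  ![(c - 1) / 3, (16 - 5 * c) / 3, (10 * c - 30) / 3, (16 - 10 * c) / 3, (5 * c - 1) / 3, -c / 3]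

theorem SminusR_eq_stencil (c h : ℝ) (f : ℝ → ℝ) (x : ℝ) :
    SminusR c h f x = (h ^ 2)⁻¹ * ∑ i, bfdWeights c i * f (x + bfdNodes i * h) := by
  simp [SminusR, Fin.sum_univ_six, bfdWeights, bfdNodes]
  ring_nf

theorem SplusR_eq_SminusR_neg (c h : ℝ) (f : ℝ → ℝ) (x : ℝ) :
    SplusR c h f x = SminusR c (-h) f x := by
  simp only [SplusR, SminusR]
  ring_nf

theorem tendsto_SminusR_sub_iteratedDeriv_two (c : ℝ) {f : ℝ → ℝ} (hf : ContDiff ℝ 5 f) (x : ℝ) :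
    Tendsto (fun h : ℝ => (SminusR c h f x - iteratedDeriv 2 f x) / h ^ 3) (𝓝[≠] 0)
      (𝓝 (-c * iteratedDeriv 5 f x / 96)) := by
  have hstencil := tendsto_stencil_sub_iteratedDeriv_two univ (bfdWeights c) bfdNodes hf x
    (m := -5 * c / 4) ?_ ?_ ?_ ?_ ?_ ?_
  · simp only [smul_eq_mul, ← SminusR_eq_stencil] at hstencil
    convert hstencil using 2 with h
    · ring
    · ring
  all_goals simp [Fin.sum_univ_six, bfdWeights, bfdNodes]; ring

theorem tendsto_SplusR_sub_iteratedDeriv_two (c : ℝ) {f : ℝ → ℝ} (hf : ContDiff ℝ 5 f) (x : ℝ) :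
    Tendsto (fun h : ℝ => (SplusR c h f x - iteratedDeriv 2 f x) / h ^ 3) (𝓝[≠] 0)
      (𝓝 (c * iteratedDeriv 5 f x / 96)) := by
  have hneg : Tendsto (fun h : ℝ => -h) (𝓝[≠] 0) (𝓝[≠] 0) := by
    simpa using (continuous_neg.continuousWithinAt (s := {0}ᶜ) (x := (0:ℝ))).tendsto_nhdsWithin
      fun h (hh : h ≠ 0) => neg_ne_zero.2 hh
  convert ((tendsto_SminusR_sub_iteratedDeriv_two c hf x).comp hneg).neg using 2 with h
  · simp [SplusR_eq_SminusR_neg, Odd.neg_pow (by decide : Odd 3), div_neg]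
  · ring

/-- The BFD stencils are third-order accurate approximations of `f''(x)`:
as `h → 0⁺`, `(S⁻ₕf(x) − f''(x))/h³ → −c f⁽⁵⁾(x)/96` and
`(S⁺ₕf(x) − f''(x))/h³ → c f⁽⁵⁾(x)/96`. -/
theorem bfd_truncation_error (c : ℝ) (f : ℝ → ℝ) (hf : ContDiff ℝ 6 f) (x : ℝ) :
    Tendsto (fun h : ℝ => (SminusR c h f x - iteratedDeriv 2 f x)/h^3) (𝓝[>] 0)
      (𝓝 (-c * iteratedDeriv 5 f x / 96)) ∧
    Tendsto (fun h : ℝ => (SplusR c h f x - iteratedDeriv 2 f x)/h^3) (𝓝[>] 0)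
      (𝓝 (c * iteratedDeriv 5 f x / 96)) := by
  have hf5 : ContDiff ℝ 5 f := hf.of_le (by norm_num)
  exact ⟨(tendsto_SminusR_sub_iteratedDeriv_two c hf5 x).mono_left (nhdsGT_le_nhdsNE 0),
    (tendsto_SplusR_sub_iteratedDeriv_two c hf5 x).mono_left (nhdsGT_le_nhdsNE 0)⟩
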